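/- arXiv:2306.07620 — 2 statements merged into one kernel-verified Lean document; each statement's English description precedes it below -/
import Mathlib

section
/- Let a < b, let N ≥ 1, and let β_1, …, β_N : ℝ → ℝ be continuous basis functions. Suppose the disturbance d : ℝ → ℝ satisfies exactly d(t) = Σ_{j=1}^{N} b_j β_j(t) on [a,b] for real coefficients b_1, …, b_N, and suppose x_n : ℝ → ℝ is continuously differentiable on [a,b], g_n : ℝ → ℝ is continuous, and ẋ_n(t) = g_n(t) + d(t) on [a,b]. Let φ_1, …, φ_N be modulating functions of order at least 1 on [a,b] such that the N × N matrix Θ_d with entries (Θ_d)_{ij} = ∫_a^b φ_i(t) β_j(t) dt is invertible. Then (b_1, …, b_N)^T = −Θ_d^{−1} w, where w_i = ∫_a^b φ_i'(t) x_n(t) dt + ∫_a^b φ_i(t) g_n(t) dt. -/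
/-!
Integrating `φᵢ · ẋₙ` over `[a, b]` and moving the derivative onto `φᵢ` (the boundary terms vanish
because `φᵢ(a) = φᵢ(b) = 0`) gives `∫ φᵢ' xₙ = -∫ φᵢ gₙ - ∑ⱼ (Θ_d)ᵢⱼ bⱼ`, i.e. `Θ_d b = -w`;
inverting `Θ_d` yields the closed form.
-/

/-- A modulating function of order `k` on `[a,b]`. -/
def IsModulatingOn (φ : ℝ → ℝ) (k : ℕ) (a b : ℝ) : Prop :=
  (∃ t ∈ Set.Icc a b, φ t ≠ 0) ∧ ContDiffOn ℝ k φ (Set.Icc a b) ∧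
    ∀ i < k, iteratedDerivWithin i φ (Set.Icc a b) a = 0 ∧
      iteratedDerivWithin i φ (Set.Icc a b) b = 0

open Set intervalIntegral
open MeasureTheory (volume)

theorem integral_derivWithin_mul_eq_neg_integral_mul_derivWithin {a b : ℝ} {u v : ℝ → ℝ}
    (hab : a < b) (hu : ContDiffOn ℝ 1 u (Icc a b)) (hv : ContDiffOn ℝ 1 v (Icc a b))
    (hua : u a = 0) (hub : u b = 0) :
    ∫ t in a..b, derivWithin u (Icc a b) t * v t =
      -∫ t in a..b, u t * derivWithin v (Icc a b) t := by
  have hu' := hu.continuousOn_derivWithin (uniqueDiffOn_Icc hab) le_rfl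
  have hv' := hv.continuousOn_derivWithin (uniqueDiffOn_Icc hab) le_rfl
  have hparts := integral_deriv_mul_eq_sub_of_hasDerivWithinAt (u := u) (v := v)
    (fun t ht => by
      rw [uIcc_of_le hab.le] at ht ⊢
      exact (hu.differentiableOn one_ne_zero t ht).hasDerivWithinAt)
    (fun t ht => by
      rw [uIcc_of_le hab.le] at ht ⊢
      exact (hv.differentiableOn one_ne_zero t ht).hasDerivWithinAt)
    (hu'.intervalIntegrable_of_Icc hab.le) (hv'.intervalIntegrable_of_Icc hab.le)
  rw [integral_add, hua, hub] at hparts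
  · linarith
  · exact (hu'.mul hv.continuousOn).intervalIntegrable_of_Icc hab.le
  · exact (hu.continuousOn.mul hv').intervalIntegrable_of_Icc hab.le

theorem integral_mul_sum_mul {ι : Type*} {a b : ℝ} (s : Finset ι) (f : ℝ → ℝ) (c : ι → ℝ)
    (β : ι → ℝ → ℝ) (hβ : ∀ j ∈ s, IntervalIntegrable (fun t => f t * β j t) volume a b) :
    ∫ t in a..b, f t * ∑ j ∈ s, c j * β j t = ∑ j ∈ s, (∫ t in a..b, f t * β j t) * c j := by
  simp_rw [Finset.mul_sum, mul_left_comm (f _)]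
  rw [integral_finsetSum fun j hj => (hβ j hj).const_mul (c j)]
  simp_rw [integral_const_mul, mul_comm (c _)]

namespace IsModulatingOn

variable {φ : ℝ → ℝ} {k : ℕ} {a b : ℝ}

theorem contDiffOn_one (hφ : IsModulatingOn φ k a b) (hk : 1 ≤ k) :
    ContDiffOn ℝ 1 φ (Icc a b) :=
  hφ.2.1.of_le (by exact_mod_cast hk)

theorem apply_left_eq_zero (hφ : IsModulatingOn φ k a b) (hk : 1 ≤ k) : φ a = 0 := by
  simpa using (hφ.2.2 0 hk).1

theorem apply_right_eq_zero (hφ : IsModulatingOn φ k a b) (hk : 1 ≤ k) : φ b = 0 := by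
  simpa using (hφ.2.2 0 hk).2

theorem integral_derivWithin_mul_eq (hφ : IsModulatingOn φ k a b) (hk : 1 ≤ k) (hab : a < b)
    {x : ℝ → ℝ} (hx : ContDiffOn ℝ 1 x (Icc a b)) :
    ∫ t in a..b, derivWithin φ (Icc a b) t * x t =
      -∫ t in a..b, φ t * derivWithin x (Icc a b) t :=
  integral_derivWithin_mul_eq_neg_integral_mul_derivWithin hab (hφ.contDiffOn_one hk) hx
    (hφ.apply_left_eq_zero hk) (hφ.apply_right_eq_zero hk)

end IsModulatingOn

theorem Matrix.eq_neg_inv_mulVec_of_mulVec_eq_neg {n α : Type*} [Fintype n] [DecidableEq n]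
    [CommRing α] {A : Matrix n n α} (hA : IsUnit A) {u v : n → α} (h : A.mulVec v = -u) :
    v = -(A⁻¹.mulVec u) := by
  have := hA.invertible
  rw [← Matrix.mulVec_neg, Matrix.inv_mulVec_eq_vec h.symm]

theorem disturbance_coefficients_closed_form_general
    (a b : ℝ) (hab : a < b) (N : ℕ)
    (β : Fin N → ℝ → ℝ) (hβ : ∀ j, Continuous (β j))
    (xn gn d : ℝ → ℝ) (coef : Fin N → ℝ)
    (hrep : ∀ t ∈ Set.Icc a b, d t = ∑ j, coef j * β j t)
    (hx : ContDiffOn ℝ 1 xn (Set.Icc a b)) (hg : Continuous gn)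
    (hsys : ∀ t ∈ Set.Icc a b,
      derivWithin xn (Set.Icc a b) t = gn t + d t)
    (φ : Fin N → ℝ → ℝ) (l : Fin N → ℕ) (hl : ∀ i, 1 ≤ l i)
    (hφ : ∀ i, IsModulatingOn (φ i) (l i) a b)
    (Θd : Matrix (Fin N) (Fin N) ℝ)
    (hΘd : Θd = Matrix.of fun i j => ∫ t in a..b, φ i t * β j t)
    (hinv : IsUnit Θd) :
    coef = -(Θd⁻¹.mulVec fun i =>
      (∫ t in a..b, derivWithin (φ i) (Set.Icc a b) t * xn t) +
        ∫ t in a..b, φ i t * gn t) := by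
  refine Matrix.eq_neg_inv_mulVec_of_mulVec_eq_neg hinv (funext fun i => ?_)
  have hφi : ContinuousOn (φ i) (uIcc a b) := by
    rw [uIcc_of_le hab.le]; exact ((hφ i).contDiffOn_one (hl i)).continuousOn
  have hmodulated : ∫ t in a..b, φ i t * derivWithin xn (Icc a b) t =
      (∫ t in a..b, φ i t * gn t) + ∫ t in a..b, φ i t * ∑ j, coef j * β j t :=
    calc _ = ∫ t in a..b, φ i t * gn t + φ i t * ∑ j, coef j * β j t :=
          integral_congr fun t ht => by
            rw [uIcc_of_le hab.le] at ht
            simp only [hsys t ht, hrep t ht, mul_add]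
      _ = _ := integral_add (hφi.mul hg.continuousOn).intervalIntegrable
          (hφi.mul (continuousOn_finsetSum _ fun j _ =>
            (continuous_const.mul (hβ j)).continuousOn)).intervalIntegrable
  have hcoef := integral_mul_sum_mul (a := a) (b := b) Finset.univ (φ i) coef β
    fun j _ => (hφi.mul (hβ j).continuousOn).intervalIntegrable
  simp only [hΘd, Matrix.mulVec, dotProduct, Matrix.of_apply, Pi.neg_apply]
  rw [(hφ i).integral_derivWithin_mul_eq (hl i) hab hx]
  linarith

/-- closed-form solution for the coefficients of the basis decomposition of
the disturbance `d`, `(b_1,…,b_N)ᵀ = −Θ_d⁻¹ w`, from the one-step modulated equations. -/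
theorem disturbance_coefficients_closed_form
    (a b : ℝ) (hab : a < b) (N : ℕ) (hN : 1 ≤ N)
    (β : Fin N → ℝ → ℝ) (hβ : ∀ j, Continuous (β j))
    (xn gn d : ℝ → ℝ) (coef : Fin N → ℝ)
    (hrep : ∀ t ∈ Set.Icc a b, d t = ∑ j, coef j * β j t)
    (hx : ContDiffOn ℝ 1 xn (Set.Icc a b)) (hg : Continuous gn)
    (hsys : ∀ t ∈ Set.Icc a b,
      derivWithin xn (Set.Icc a b) t = gn t + d t)
    (φ : Fin N → ℝ → ℝ) (l : Fin N → ℕ) (hl : ∀ i, 1 ≤ l i)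
    (hφ : ∀ i, IsModulatingOn (φ i) (l i) a b)
    (Θd : Matrix (Fin N) (Fin N) ℝ)
    (hΘd : Θd = Matrix.of fun i j => ∫ t in a..b, φ i t * β j t)
    (hinv : IsUnit Θd) :
    coef = -(Θd⁻¹.mulVec fun i =>
      (∫ t in a..b, derivWithin (φ i) (Set.Icc a b) t * xn t) +
        ∫ t in a..b, φ i t * gn t) :=
  disturbance_coefficients_closed_form_general a b hab N β hβ xn gn d coef hrep hx hg hsys φ l hl hφ
    Θd hΘd hinv
end

section
/- Let a < b, let n ≥ 2 and 2 ≤ k ≤ n, let x_1, …, x_n, g_1, …, g_{n−1} : ℝ → ℝ be n times continuously differentiable on [a,b] with ẋ_r(t) = x_{r+1}(t) + g_r(t) on [a,b] for r = 1, …, n−1, and let φ be a modulating function of order at least k on [a,b]. Then the two modulated expressions for x_k agree: −∫_a^b φ'(t) x_{k−1}(t) dt − ∫_a^b φ(t) g_{k−1}(t) dt = (−1)^{k−1} ∫_a^b φ^((k−1))(t) x_1(t) dt − Σ_{r=1}^{k−1} (−1)^{k−1−r} ∫_a^b φ^((k−1−r))(t) g_r(t) dt, i.e. the one-step algebraic system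 and the output-only algebraic system for the coefficients of x_k have identical right-hand sides. -/
/-! Each equation `ẋ_r = x_{r+1} + g_r`, modulated against `φ^(j)` and integrated by parts (the
boundary terms vanish because `φ^(j)(a) = φ^(j)(b) = 0`), gives
`⟨φ^(j), x_{r+1}⟩ = -⟨φ^(j+1), x_r⟩ - ⟨φ^(j), g_r⟩`. With `j = 0`, `r = k - 1` it shows that the
left-hand side equals `⟨φ, x_k⟩`; iterating it down to `x_1` gives the right-hand side. -/

open Set intervalIntegral

namespace IsModulatingOn

variable {φ : ℝ → ℝ} {l j : ℕ} {a b : ℝ}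

theorem continuousOn_iteratedDerivWithin (hφ : IsModulatingOn φ l a b) (hab : a < b)
    (hj : j ≤ l) : ContinuousOn (iteratedDerivWithin j φ (Icc a b)) (Icc a b) :=
  hφ.2.1.continuousOn_iteratedDerivWithin (by exact_mod_cast hj) (uniqueDiffOn_Icc hab)

theorem hasDerivWithinAt_iteratedDerivWithin (hφ : IsModulatingOn φ l a b) (hab : a < b)
    (hj : j < l) {t : ℝ} (ht : t ∈ Icc a b) :
    HasDerivWithinAt (iteratedDerivWithin j φ (Icc a b))
      (iteratedDerivWithin (j + 1) φ (Icc a b) t) (Icc a b) t := by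
  rw [iteratedDerivWithin_succ]
  exact (hφ.2.1.differentiableOn_iteratedDerivWithin (by exact_mod_cast hj)
    (uniqueDiffOn_Icc hab) t ht).hasDerivWithinAt

theorem integral_iteratedDerivWithin_mul_deriv (hφ : IsModulatingOn φ l a b) (hab : a < b)
    (hj : j < l) {ψ ψ' : ℝ → ℝ} (hψ : ∀ t ∈ Icc a b, HasDerivWithinAt ψ (ψ' t) (Icc a b) t)
    (hψ' : ContinuousOn ψ' (Icc a b)) :
    ∫ t in a..b, iteratedDerivWithin j φ (Icc a b) t * ψ' t =
      -∫ t in a..b, iteratedDerivWithin (j + 1) φ (Icc a b) t * ψ t := by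
  rw [← uIcc_of_le hab.le] at hψ
  have hparts := integral_mul_deriv_eq_deriv_mul_of_hasDerivWithinAt
    (by rw [uIcc_of_le hab.le]; exact fun t ht => hφ.hasDerivWithinAt_iteratedDerivWithin hab hj ht)
    hψ ((hφ.continuousOn_iteratedDerivWithin hab hj).intervalIntegrable_of_Icc hab.le)
    (hψ'.intervalIntegrable_of_Icc hab.le)
  rw [hparts, (hφ.2.2 j hj).1, (hφ.2.2 j hj).2]
  ring

theorem integral_iteratedDerivWithin_mul_of_derivWithin_eq (hφ : IsModulatingOn φ l a b)
    (hab : a < b) (hj : j < l) {y z h : ℝ → ℝ} (hy : DifferentiableOn ℝ y (Icc a b))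
    (hz : ContinuousOn z (Icc a b)) (hh : ContinuousOn h (Icc a b))
    (hyz : ∀ t ∈ Icc a b, derivWithin y (Icc a b) t = z t + h t) :
    ∫ t in a..b, iteratedDerivWithin j φ (Icc a b) t * z t =
      -(∫ t in a..b, iteratedDerivWithin (j + 1) φ (Icc a b) t * y t) -
        ∫ t in a..b, iteratedDerivWithin j φ (Icc a b) t * h t := by
  have hφj := hφ.continuousOn_iteratedDerivWithin hab hj.le
  have hparts := hφ.integral_iteratedDerivWithin_mul_deriv hab hj
    (fun t ht => hyz t ht ▸ (hy t ht).hasDerivWithinAt) (hz.add hh)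
  simp only [Pi.add_apply, mul_add] at hparts
  rw [integral_add (f := fun t => iteratedDerivWithin j φ (Icc a b) t * z t)
    (g := fun t => iteratedDerivWithin j φ (Icc a b) t * h t)
    ((hφj.mul hz).intervalIntegrable_of_Icc hab.le)
    ((hφj.mul hh).intervalIntegrable_of_Icc hab.le)] at hparts
  linarith

theorem integral_iteratedDerivWithin_mul_eq_output_only (hφ : IsModulatingOn φ l a b)
    (hab : a < b)
    (x g : ℕ → ℝ → ℝ) (m : ℕ)
    (hx : ∀ r, 1 ≤ r → r ≤ m → DifferentiableOn ℝ (x r) (Icc a b))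
    (hx' : ∀ r, 1 ≤ r → r ≤ m → ContinuousOn (x (r + 1)) (Icc a b))
    (hg : ∀ r, 1 ≤ r → r ≤ m → ContinuousOn (g r) (Icc a b))
    (hsys : ∀ r, 1 ≤ r → r ≤ m → ∀ t ∈ Icc a b,
      derivWithin (x r) (Icc a b) t = x (r + 1) t + g r t)
    (j : ℕ) (hjm : j + m ≤ l) :
    ∫ t in a..b, iteratedDerivWithin j φ (Icc a b) t * x (m + 1) t =
      (-1 : ℝ) ^ m * (∫ t in a..b, iteratedDerivWithin (j + m) φ (Icc a b) t * x 1 t) -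
        ∑ r ∈ Finset.Icc 1 m, (-1 : ℝ) ^ (m - r) *
          ∫ t in a..b, iteratedDerivWithin (j + m - r) φ (Icc a b) t * g r t := by
  induction m generalizing j with
  | zero => simp
  | succ m ih =>
    have hstep := hφ.integral_iteratedDerivWithin_mul_of_derivWithin_eq hab (j := j) (by omega)
      (hx (m + 1) (by omega) le_rfl) (hx' (m + 1) (by omega) le_rfl)
      (hg (m + 1) (by omega) le_rfl) (hsys (m + 1) (by omega) le_rfl)
    have hdown := ih (fun r h1 h2 => hx r h1 (by omega)) (fun r h1 h2 => hx' r h1 (by omega))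
      (fun r h1 h2 => hg r h1 (by omega)) (fun r h1 h2 => hsys r h1 (by omega)) (j + 1) (by omega)
    have hreindex : ∑ r ∈ Finset.Icc 1 m, (-1 : ℝ) ^ (m + 1 - r) *
          ∫ t in a..b, iteratedDerivWithin (j + (m + 1) - r) φ (Icc a b) t * g r t =
        -∑ r ∈ Finset.Icc 1 m, (-1 : ℝ) ^ (m - r) *
          ∫ t in a..b, iteratedDerivWithin (j + 1 + m - r) φ (Icc a b) t * g r t := by
      rw [← Finset.sum_neg_distrib]
      refine Finset.sum_congr rfl fun r hr => ?_
      rw [Finset.mem_Icc] at hr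
      rw [show m + 1 - r = m - r + 1 by omega, show j + (m + 1) - r = j + 1 + m - r by omega]
      ring
    rw [hstep, hdown, Finset.sum_Icc_succ_top (by omega), hreindex,
      show j + (m + 1) - (m + 1) = j by omega, Nat.sub_self, show j + 1 + m = j + (m + 1) by omega]
    ring

end IsModulatingOn

theorem one_step_eq_output_only_state_general
    (a b : ℝ) (hab : a < b) (n : ℕ)
    (k : ℕ) (hk2 : 2 ≤ k) (hkn : k ≤ n)
    (x g : ℕ → ℝ → ℝ)
    (hx : ∀ r, 1 ≤ r → r ≤ n → ContDiffOn ℝ n (x r) (Set.Icc a b))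
    (hg : ∀ r, 1 ≤ r → r ≤ n - 1 → ContDiffOn ℝ n (g r) (Set.Icc a b))
    (hsys : ∀ r, 1 ≤ r → r ≤ n - 1 → ∀ t ∈ Set.Icc a b,
      derivWithin (x r) (Set.Icc a b) t = x (r + 1) t + g r t)
    (φ : ℝ → ℝ) (l : ℕ) (hl : k ≤ l) (hφ : IsModulatingOn φ l a b) :
    -(∫ t in a..b, derivWithin φ (Set.Icc a b) t * x (k - 1) t)
        - ∫ t in a..b, φ t * g (k - 1) t =
      (-1 : ℝ) ^ (k - 1) *
          (∫ t in a..b, iteratedDerivWithin (k - 1) φ (Set.Icc a b) t * x 1 t)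
        - ∑ r ∈ Finset.Icc 1 (k - 1), (-1 : ℝ) ^ (k - 1 - r) *
            ∫ t in a..b, iteratedDerivWithin (k - 1 - r) φ (Set.Icc a b) t * g r t := by
  obtain ⟨m, rfl⟩ : ∃ m, k = m + 1 := ⟨k - 1, by omega⟩
  have hx_diff : ∀ r, 1 ≤ r → r ≤ m → DifferentiableOn ℝ (x r) (Icc a b) :=
    fun r h1 h2 => (hx r h1 (by omega)).differentiableOn
      (by simp only [ne_eq, Nat.cast_eq_zero]; omega)
  have hx_cont : ∀ r, 1 ≤ r → r ≤ m → ContinuousOn (x (r + 1)) (Icc a b) :=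
    fun r h1 h2 => (hx (r + 1) (by omega) (by omega)).continuousOn
  have hg_cont : ∀ r, 1 ≤ r → r ≤ m → ContinuousOn (g r) (Icc a b) :=
    fun r h1 h2 => (hg r h1 (by omega)).continuousOn
  have hsys' : ∀ r, 1 ≤ r → r ≤ m → ∀ t ∈ Icc a b,
      derivWithin (x r) (Icc a b) t = x (r + 1) t + g r t :=
    fun r h1 h2 => hsys r h1 (by omega)
  have hone_step := hφ.integral_iteratedDerivWithin_mul_of_derivWithin_eq hab (j := 0) (by omega)
    (hx_diff m (by omega) le_rfl) (hx_cont m (by omega) le_rfl) (hg_cont m (by omega) le_rfl)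
    (hsys' m (by omega) le_rfl)
  have houtput := hφ.integral_iteratedDerivWithin_mul_eq_output_only hab x g m
    hx_diff hx_cont hg_cont hsys' 0 (by omega)
  simp only [iteratedDerivWithin_zero, iteratedDerivWithin_one, zero_add] at hone_step houtput
  simpa only [Nat.add_sub_cancel, ← hone_step] using houtput

/-- the one-step and the output-only modulated expressions for the state
`x_k` of the triangular system coincide. -/
theorem one_step_eq_output_only_state
    (a b : ℝ) (hab : a < b) (n : ℕ) (hn : 2 ≤ n)
    (k : ℕ) (hk2 : 2 ≤ k) (hkn : k ≤ n)
    (x g : ℕ → ℝ → ℝ)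
    (hx : ∀ r, 1 ≤ r → r ≤ n → ContDiffOn ℝ n (x r) (Set.Icc a b))
    (hg : ∀ r, 1 ≤ r → r ≤ n - 1 → ContDiffOn ℝ n (g r) (Set.Icc a b))
    (hsys : ∀ r, 1 ≤ r → r ≤ n - 1 → ∀ t ∈ Set.Icc a b,
      derivWithin (x r) (Set.Icc a b) t = x (r + 1) t + g r t)
    (φ : ℝ → ℝ) (l : ℕ) (hl : k ≤ l) (hφ : IsModulatingOn φ l a b) :
    -(∫ t in a..b, derivWithin φ (Set.Icc a b) t * x (k - 1) t)
        - ∫ t in a..b, φ t * g (k - 1) t =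
      (-1 : ℝ) ^ (k - 1) *
          (∫ t in a..b, iteratedDerivWithin (k - 1) φ (Set.Icc a b) t * x 1 t)
        - ∑ r ∈ Finset.Icc 1 (k - 1), (-1 : ℝ) ^ (k - 1 - r) *
            ∫ t in a..b, iteratedDerivWithin (k - 1 - r) φ (Set.Icc a b) t * g r t :=
  one_step_eq_output_only_state_general a b hab n k hk2 hkn x g hx hg hsys φ l hl hφ
end
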